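/- arXiv:1602.04729 — 3 statements merged into one kernel-verified Lean document; each statement's English description precedes it below -/
import Mathlib

section
/- There exists an absolute constant C > 0 such that for every complex sequence (b_n)_{n≥2} supported on the integers n with Ω(n) = 2 (that is, b_n = 0 unless Ω(n) = 2) and every square-summable complex sequence (a_n)_{n≥1}, ∑_{N≥2} (log N)^{-2} |∑_{k∣N, Ω(k)=2} b_k (log k) a_{N/k}|² ≤ C · (∑_{Ω(n)=2} |b_n|² (log n)/log₂ n) · ∑_{n≥1} |a_n|². In other words, the Volterra operator T_g with a 2-homogeneous symbol g(s)=∑_{Ω(n)=2} b_n n^{-s} is bounded on H² with ‖T_g‖² ≪ ∑_{Ω(n)=2} |b_n|² (log n)/log₂ n. -/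
/-!
For fixed `N`, apply Cauchy–Schwarz to the inner sum with the weights `log k · log₂ k`. Every
`k ∣ N` with `Ω(k) = 2` is a product `p q` of primes dividing `N`, so the total weight is at most
`log₂ N · 2 ω(N) ∑_{p ∣ N} log p ≤ 2 ω(N) log₂ N · log N`. Since `ω(N)! ≤ N`, one has
`ω(N) log₂ N ≪ log N`, so the weights sum to `O((log N)²)`, which cancels the factor
`(log N)⁻²`. What is left is a Dirichlet convolution of `|b_k|² log k / log₂ k` with `|a_m|²`,
whose total is at most the product of the two sums.
-/

open scoped ENNReal

/-- `log₂ x = log log x`, with the convention that it equals `1` for `x ≤ e^e`. -/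
noncomputable def loglog (x : ℝ) : ℝ := max 1 (Real.log (Real.log x))

open Finset Real
open scoped Nat

lemma one_le_loglog (x : ℝ) : 1 ≤ loglog x := le_max_left _ _

lemma loglog_pos (x : ℝ) : 0 < loglog x := one_pos.trans_le (one_le_loglog x)

lemma loglog_le_loglog {x y : ℝ} (hx : 1 ≤ x) (hxy : x ≤ y) : loglog x ≤ loglog y := by
  refine max_le (one_le_loglog y) ?_
  rcases (log_nonneg hx).eq_or_lt with hlog | hlog
  · rw [← hlog, log_zero]
    exact zero_le_one.trans (one_le_loglog y)
  · exact (log_le_log hlog (log_le_log (by linarith) hxy)).trans (le_max_right _ _)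

theorem Finset.factorial_card_le_prod {S : Finset ℕ} (hS : ∀ x ∈ S, 0 < x) :
    (#S)! ≤ ∏ x ∈ S, x := by
  induction S using Finset.induction_on_max with
  | empty => simp
  | insert a s hlt ih =>
    have hcard : #s + 1 ≤ a := by
      have hsub : s ⊆ Ico 1 a := fun x hx =>
        mem_Ico.2 ⟨hS x (mem_insert_of_mem hx), hlt x hx⟩
      have := card_le_card hsub
      have := hS a (mem_insert_self a s)
      simp only [Nat.card_Ico] at *
      omega
    rw [card_insert_of_notMem fun h => (hlt a h).false, prod_insert fun h => (hlt a h).false,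
      Nat.factorial_succ]
    exact Nat.mul_le_mul hcard (ih fun x hx => hS x (mem_insert_of_mem hx))

lemma Nat.factorial_card_primeFactors_le {N : ℕ} (hN : N ≠ 0) : (#N.primeFactors)! ≤ N :=
  (Finset.factorial_card_le_prod fun _ hp => (Nat.prime_of_mem_primeFactors hp).pos).trans
    (Nat.le_of_dvd (Nat.pos_of_ne_zero hN) (Nat.prod_primeFactors_dvd N))

lemma Nat.two_pow_card_primeFactors_le {N : ℕ} (hN : N ≠ 0) : 2 ^ #N.primeFactors ≤ N :=
  (pow_card_le_prod _ _ _ fun _ hp => (Nat.prime_of_mem_primeFactors hp).two_le).trans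
    (Nat.le_of_dvd (Nat.pos_of_ne_zero hN) (Nat.prod_primeFactors_dvd N))

lemma Nat.sum_log_primeFactors_le (N : ℕ) :
    ∑ p ∈ N.primeFactors, Real.log p ≤ Real.log N := by
  rw [← ArithmeticFunction.vonMangoldt_sum]
  calc ∑ p ∈ N.primeFactors, Real.log p
      = ∑ p ∈ N.primeFactors, ArithmeticFunction.vonMangoldt p :=
        sum_congr rfl fun p hp =>
          (ArithmeticFunction.vonMangoldt_apply_prime (Nat.prime_of_mem_primeFactors hp)).symm
    _ ≤ ∑ d ∈ N.divisors, ArithmeticFunction.vonMangoldt d :=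
        sum_le_sum_of_subset_of_nonneg (fun _ hp =>
          Nat.mem_divisors.2 (Nat.mem_primeFactors.1 hp).2)
          fun _ _ _ => ArithmeticFunction.vonMangoldt_nonneg

lemma mul_log_le_add_log_of_factorial_le {n : ℕ} {x : ℝ} (hfact : (n ! : ℝ) ≤ x) :
    n * log n ≤ n + log x := by
  rcases n.eq_zero_or_pos with rfl | hn
  · simpa using log_nonneg (by simpa using hfact)
  have hx : 0 < x := (Nat.cast_pos.2 n.factorial_pos).trans_le hfact
  have hpow : (n : ℝ) ^ n ≤ exp n * x := by
    have := pow_div_factorial_le_exp (n : ℝ) (Nat.cast_nonneg n) n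
    rw [div_le_iff₀ (by positivity)] at this
    exact this.trans (mul_le_mul_of_nonneg_left hfact (exp_pos _).le)
  have := log_le_log (by positivity) hpow
  rwa [log_pow, log_mul (exp_pos _).ne' hx.ne', log_exp] at this

lemma log_le_two_mul_sqrt {x : ℝ} (hx : 0 ≤ x) : log x ≤ 2 * √x := by
  rcases hx.eq_or_lt with rfl | hx
  · simp
  have := log_le_sub_one_of_pos (sqrt_pos.2 hx)
  rw [log_sqrt hx.le] at this
  linarith

/-- `n ! ≥ (n / e) ^ n` gives `n log n ≤ n + log x`, enough when `log x ≤ n²`; otherwise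
`n < √(log x)` and `log log x ≤ 2 √(log x)`. -/
lemma mul_loglog_le_of_factorial_le {n : ℕ} {x : ℝ} (hpow : 2 ^ n ≤ x) (hfact : (n ! : ℝ) ≤ x) :
    n * loglog x ≤ 6 * log x := by
  have hx : 1 ≤ x := one_le_pow₀ (M₀ := ℝ) one_le_two |>.trans hpow
  set L := log x
  have hL0 : 0 ≤ L := log_nonneg hx
  have hn : (n : ℝ) ≤ 3 / 2 * L := by
    have := log_le_log (by positivity) hpow
    rw [log_pow] at this
    nlinarith [log_two_gt_d9, (Nat.cast_nonneg n : (0 : ℝ) ≤ n)]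
  have hnlogn := mul_log_le_add_log_of_factorial_le hfact
  rw [loglog, mul_max_of_nonneg _ _ (Nat.cast_nonneg n), max_le_iff]
  refine ⟨by linarith, ?_⟩
  rcases le_or_gt (log L) 0 with hlogL | hlogL
  · nlinarith [(Nat.cast_nonneg n : (0 : ℝ) ≤ n)]
  have hL1 : 0 < L := hL0.lt_of_ne fun h => by simp [← h] at hlogL
  rcases le_or_gt L ((n : ℝ) ^ 2) with hsmall | hlarge
  · have : log L ≤ 2 * log n := by
      rw [show 2 * log n = log ((n : ℝ) ^ 2) by rw [log_pow]; norm_num]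
      exact log_le_log hL1 hsmall
    nlinarith [(Nat.cast_nonneg n : (0 : ℝ) ≤ n)]
  · have hnL : (n : ℝ) ≤ √L := le_sqrt_of_sq_le hlarge.le
    have := log_le_two_mul_sqrt hL0
    calc n * log L ≤ √L * (2 * √L) := mul_le_mul hnL this hlogL.le (sqrt_nonneg L)
      _ = 2 * L := by rw [mul_left_comm, mul_self_sqrt hL0]
      _ ≤ 6 * L := by linarith

lemma Nat.card_primeFactors_mul_loglog_le {N : ℕ} (hN : N ≠ 0) :
    #N.primeFactors * loglog N ≤ 6 * Real.log N :=
  mul_loglog_le_of_factorial_le (by exact_mod_cast Nat.two_pow_card_primeFactors_le hN)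
    (by exact_mod_cast Nat.factorial_card_primeFactors_le hN)

lemma Nat.exists_mem_primeFactors_mul_eq {N k : ℕ} (hN : N ≠ 0) (hk : k ∣ N)
    (hΩ : k.primeFactorsList.length = 2) :
    ∃ pq ∈ N.primeFactors ×ˢ N.primeFactors, pq.1 * pq.2 = k := by
  obtain ⟨p, q, hpq⟩ := List.length_eq_two.1 hΩ
  have hsub : k.primeFactors ⊆ N.primeFactors := Nat.primeFactors_mono hk hN
  refine ⟨(p, q), mem_product.2 ⟨hsub ?_, hsub ?_⟩, ?_⟩
  · exact Nat.mem_primeFactors_iff_mem_primeFactorsList.2 (by simp [hpq])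
  · exact Nat.mem_primeFactors_iff_mem_primeFactorsList.2 (by simp [hpq])
  · simpa [hpq] using Nat.prod_primeFactorsList (ne_zero_of_dvd_ne_zero hN hk)

lemma sum_log_mul_loglog_le (N : ℕ) :
    ∑ k ∈ {k ∈ N.divisors | k.primeFactorsList.length = 2}, log k * loglog k
      ≤ 12 * log N ^ 2 := by
  rcases eq_or_ne N 0 with rfl | hN
  · simp
  set P := N.primeFactors
  have hsub : {k ∈ N.divisors | k.primeFactorsList.length = 2} ⊆
      (P ×ˢ P).image fun pq : ℕ × ℕ => pq.1 * pq.2 := by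
    intro k hk
    obtain ⟨hkN, hΩ⟩ := mem_filter.1 hk
    exact mem_image.2 (Nat.exists_mem_primeFactors_mul_eq hN (Nat.dvd_of_mem_divisors hkN) hΩ)
  have hlog_mul : ∀ pq ∈ P ×ˢ P, log (↑(pq.1 * pq.2 : ℕ)) = log pq.1 + log pq.2 := by
    intro pq hpq
    obtain ⟨hp, hq⟩ := mem_product.1 hpq
    push_cast
    exact log_mul (Nat.cast_ne_zero.2 (Nat.pos_of_mem_primeFactors hp).ne')
      (Nat.cast_ne_zero.2 (Nat.pos_of_mem_primeFactors hq).ne')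
  calc ∑ k ∈ {k ∈ N.divisors | k.primeFactorsList.length = 2}, log k * loglog k
      ≤ ∑ k ∈ {k ∈ N.divisors | k.primeFactorsList.length = 2}, log k * loglog N :=
        sum_le_sum fun k hk => mul_le_mul_of_nonneg_left
          (loglog_le_loglog (by exact_mod_cast Nat.pos_of_mem_divisors (mem_filter.1 hk).1)
            (by exact_mod_cast Nat.divisor_le (mem_filter.1 hk).1))
          (log_natCast_nonneg k)
    _ ≤ ∑ k ∈ (P ×ˢ P).image (fun pq : ℕ × ℕ => pq.1 * pq.2), log k * loglog N :=
        sum_le_sum_of_subset_of_nonneg hsub fun k _ _ =>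
          mul_nonneg (log_natCast_nonneg k) (loglog_pos _).le
    _ ≤ ∑ pq ∈ P ×ˢ P, log (↑(pq.1 * pq.2 : ℕ)) * loglog N :=
        sum_image_le_of_nonneg fun k _ => mul_nonneg (log_natCast_nonneg k) (loglog_pos _).le
    _ = 2 * (#P * loglog N) * ∑ p ∈ P, log p := by
        rw [sum_congr rfl fun pq hpq => by rw [hlog_mul pq hpq], ← sum_mul, sum_product]
        simp only [sum_add_distrib, sum_const, nsmul_eq_mul, ← mul_sum]
        ring
    _ ≤ 2 * (6 * log N) * log N := by
        gcongr 2 * ?_ * ?_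
        · exact Nat.card_primeFactors_mul_loglog_le hN
        · exact Nat.sum_log_primeFactors_le N
    _ = 12 * log N ^ 2 := by ring

theorem norm_sum_sq_le_sum_mul_sum_of_norm_sq_le_mul {ι E : Type*} [SeminormedAddCommGroup E]
    (s : Finset ι) (z : ι → E) {f g : ι → ℝ} (hf : ∀ i ∈ s, 0 ≤ f i) (hg : ∀ i ∈ s, 0 ≤ g i)
    (h : ∀ i ∈ s, ‖z i‖ ^ 2 ≤ f i * g i) :
    ‖∑ i ∈ s, z i‖ ^ 2 ≤ (∑ i ∈ s, f i) * ∑ i ∈ s, g i :=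
  (pow_le_pow_left₀ (norm_nonneg _) (norm_sum_le s z) 2).trans
    (sum_sq_le_sum_mul_sum_of_sq_le_mul s hf hg h)

lemma norm_sum_div_log_sq_le (b a : ℕ → ℂ) (N : ℕ) :
    ‖∑ k ∈ {k ∈ N.divisors | k.primeFactorsList.length = 2}, b k * (log k : ℂ) * a (N / k)‖ ^ 2
        / log N ^ 2
      ≤ 12 * ∑ k ∈ {k ∈ N.divisors | k.primeFactorsList.length = 2},
          ‖b k‖ ^ 2 * log k / loglog k * ‖a (N / k)‖ ^ 2 := by
  set F := {k ∈ N.divisors | k.primeFactorsList.length = 2}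
  have hg : ∀ k ∈ F, 0 ≤ ‖b k‖ ^ 2 * log k / loglog k * ‖a (N / k)‖ ^ 2 := fun k _ => by
    have := log_natCast_nonneg k
    have := loglog_pos k
    positivity
  refine div_le_of_le_mul₀ (sq_nonneg _) (mul_nonneg (by norm_num) (sum_nonneg hg)) ?_
  calc ‖∑ k ∈ F, b k * (log k : ℂ) * a (N / k)‖ ^ 2
      ≤ (∑ k ∈ F, log k * loglog k) * ∑ k ∈ F, ‖b k‖ ^ 2 * log k / loglog k * ‖a (N / k)‖ ^ 2 :=
        norm_sum_sq_le_sum_mul_sum_of_norm_sq_le_mul F _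
          (fun k _ => mul_nonneg (log_natCast_nonneg k) (loglog_pos k).le) hg fun k _ =>
          le_of_eq <| by
            rw [norm_mul, norm_mul, Complex.norm_real, norm_of_nonneg (log_natCast_nonneg k)]
            field_simp [(loglog_pos k).ne']
    _ ≤ 12 * log N ^ 2 * ∑ k ∈ F, ‖b k‖ ^ 2 * log k / loglog k * ‖a (N / k)‖ ^ 2 :=
        mul_le_mul_of_nonneg_right (sum_log_mul_loglog_le N) (sum_nonneg hg)
    _ = _ := by ring

theorem ENNReal.tsum_sum_divisors_mul_le (U V : ℕ → ℝ≥0∞) :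
    ∑' N, ∑ k ∈ N.divisors, U k * V (N / k) ≤ (∑' k, U k) * ∑' m, V m := by
  simp_rw [← ENNReal.tsum_mul_right, ← ENNReal.tsum_mul_left]
  rw [← ENNReal.tsum_prod]
  simp_rw [← Nat.sum_divisorsAntidiagonal fun k m => U k * V m, ← Finset.tsum_subtype]
  rw [← ENNReal.tsum_sigma' fun σ : (Σ N : ℕ, N.divisorsAntidiagonal) => U σ.2.1.1 * V σ.2.1.2]
  have hinj : Function.Injective fun σ : (Σ N : ℕ, N.divisorsAntidiagonal) => σ.2.1 := by
    rintro ⟨N, km, hkm⟩ ⟨N', km', hkm'⟩ (rfl : km = km')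
    obtain rfl : N = N' :=
      (Nat.mem_divisorsAntidiagonal.1 hkm).1.symm.trans (Nat.mem_divisorsAntidiagonal.1 hkm').1
    rfl
  exact ENNReal.tsum_comp_le_tsum_of_injective hinj fun km => U km.1 * V km.2

lemma ofReal_sum_le_sum_divisors (b a : ℕ → ℂ) (N : ℕ) :
    ENNReal.ofReal (∑ k ∈ {k ∈ N.divisors | k.primeFactorsList.length = 2},
        ‖b k‖ ^ 2 * log k / loglog k * ‖a (N / k)‖ ^ 2)
      ≤ ∑ k ∈ N.divisors,
          (if k.primeFactorsList.length = 2 then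
            ENNReal.ofReal (‖b k‖ ^ 2 * log k / loglog k) else 0) *
          (if 1 ≤ N / k then ENNReal.ofReal (‖a (N / k)‖ ^ 2) else 0) := by
  have hweight : ∀ k : ℕ, 0 ≤ ‖b k‖ ^ 2 * log k / loglog k := fun k => by
    have := log_natCast_nonneg k
    have := loglog_pos k
    positivity
  rw [ENNReal.ofReal_sum_of_nonneg fun k _ => mul_nonneg (hweight k) (sq_nonneg _)]
  refine (sum_le_sum fun k hk => ?_).trans (sum_le_sum_of_subset (filter_subset _ _))
  obtain ⟨hkN, hΩ⟩ := mem_filter.1 hk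
  have hNk : 1 ≤ N / k := Nat.div_pos (Nat.divisor_le hkN) (Nat.pos_of_mem_divisors hkN)
  rw [if_pos hΩ, if_pos hNk, ENNReal.ofReal_mul (hweight k)]

/-- there is an absolute constant `C > 0` such that for every 2-homogeneous
symbol `g(s) = ∑_{Ω(n)=2} b_n n^{-s}` the Volterra operator is bounded on `H²` with
`‖T_g f‖² ≤ C (∑_{Ω(n)=2} |b_n|² (log n)/log₂ n) ‖f‖²`. -/
theorem volterra_two_homogeneous_bounded :
    ∃ C : ℝ, 0 < C ∧ ∀ b a : ℕ → ℂ,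
      (∀ n, b n ≠ 0 → n.primeFactorsList.length = 2) →
      (∑' N : ℕ, (if 2 ≤ N then
          ENNReal.ofReal
            (‖∑ k ∈ N.divisors.filter (fun k => k.primeFactorsList.length = 2),
                b k * (Real.log k : ℂ) * a (N / k)‖ ^ 2 / Real.log N ^ 2)
        else 0))
      ≤ ENNReal.ofReal C *
          (∑' n : ℕ, (if n.primeFactorsList.length = 2 then
              ENNReal.ofReal (‖b n‖ ^ 2 * Real.log n / loglog n) else 0)) *
          ∑' n : ℕ, (if 1 ≤ n then ENNReal.ofReal (‖a n‖ ^ 2) else 0) := by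
  refine ⟨12, by norm_num, fun b a _ => ?_⟩
  set U : ℕ → ℝ≥0∞ := fun n => if n.primeFactorsList.length = 2 then
    ENNReal.ofReal (‖b n‖ ^ 2 * log n / loglog n) else 0
  set V : ℕ → ℝ≥0∞ := fun n => if 1 ≤ n then ENNReal.ofReal (‖a n‖ ^ 2) else 0
  have hterm (N : ℕ) : ENNReal.ofReal (‖∑ k ∈ {k ∈ N.divisors | k.primeFactorsList.length = 2},
      b k * (log k : ℂ) * a (N / k)‖ ^ 2 / log N ^ 2) ≤ 12 * ∑ k ∈ N.divisors, U k * V (N / k) :=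
    calc _ ≤ ENNReal.ofReal (12 * ∑ k ∈ {k ∈ N.divisors | k.primeFactorsList.length = 2},
          ‖b k‖ ^ 2 * log k / loglog k * ‖a (N / k)‖ ^ 2) :=
          ENNReal.ofReal_le_ofReal (norm_sum_div_log_sq_le b a N)
      _ ≤ 12 * ∑ k ∈ N.divisors, U k * V (N / k) := by
          rw [ENNReal.ofReal_mul (by norm_num), ENNReal.ofReal_ofNat]
          gcongr
          exact ofReal_sum_le_sum_divisors b a N
  calc _ ≤ ∑' N : ℕ, 12 * ∑ k ∈ N.divisors, U k * V (N / k) :=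
        ENNReal.tsum_le_tsum fun N => by split_ifs <;> simp only [hterm, zero_le]
    _ = 12 * ∑' N : ℕ, ∑ k ∈ N.divisors, U k * V (N / k) := ENNReal.tsum_mul_left
    _ ≤ 12 * ((∑' k, U k) * ∑' m, V m) := by gcongr; exact ENNReal.tsum_sum_divisors_mul_le U V
    _ = ENNReal.ofReal 12 * (∑' k, U k) * ∑' m, V m := by rw [ENNReal.ofReal_ofNat, mul_assoc]
end

section
/- Let c > 2√2. Then for every C > 0 there exist a finitely supported complex sequence (b_n)_{n≥2} and a finitely supported complex sequence (a_n)_{n≥1}, not identically zero, such that ∑_{N≥2} (log N)^{-2} |∑_{d∣N, d≥2} b_d (log d) a_{N/d}|² > C · (∑_{n≥2} |b_n|² n · exp(−c√(log n · log₂ n))) · ∑_{n≥1} |a_n|². In other words, the inequality ‖T_g‖² ≤ C ∑_{n≥2} |b_n|² n exp(−c√(log n log₂ n)) cannot hold for all symbols g when c > 2√2. -/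
/-!
Fix `0 < δ < 1` with `c √(2δ) > 4`, put `P = r ^ r` and let `S` be the set of the `k ≍ P / log P`
primes in `(P ^ δ, P]`. Take `b_n = n^{-1/2}` on products of `r` distinct primes of `S` and
`a_n = 1` on products of `s ≈ k / 2` distinct primes of `S`. Every such `n` has
`log n ≥ δ r² log r`, so each term of the weighted norm of `b` is at most `exp(-c √(2δ) r log r)`,
and `‖a‖² = C(k, s)`. A product `N` of `r + s` primes of `S` has `C(r + s, r)` divisors `d` with
`b_d a_{N/d} ≠ 0` and `log N ≤ (r + s) log P`, which gives
`‖T_g f‖² ≥ C(k, r + s) C(r + s, r)² P^{-r} (δ r / (r + s))²`. Since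
`C(k, r) C(k, s) ≤ 2^r C(k, r + s) C(r + s, r)` and `C(r + s, r) ≥ (s / r)^r`, the ratio of the two
sides is `exp((c √(2δ) - 4 + o(1)) r log r)`, which tends to infinity with `r`.
-/

open scoped ENNReal

open Finset Real Filter Asymptotics

noncomputable def weightedSymbolNormSq (c : ℝ) (b : ℕ → ℂ) : ℝ≥0∞ :=
  ∑' n : ℕ, (if 2 ≤ n then
    ENNReal.ofReal (‖b n‖ ^ 2 * n * Real.exp (-(c * Real.sqrt (Real.log n * loglog n))))
  else 0)

noncomputable def hardyNormSq (a : ℕ → ℂ) : ℝ≥0∞ :=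
  ∑' n : ℕ, (if 1 ≤ n then ENNReal.ofReal (‖a n‖ ^ 2) else 0)

/-- `‖T_g f‖²` for `g = ∑ b_n n^{-s}` and `f = ∑ a_n n^{-s}`, in coefficient form. -/
noncomputable def volterraNormSq (b a : ℕ → ℂ) : ℝ≥0∞ :=
  ∑' N : ℕ, (if 2 ≤ N then
    ENNReal.ofReal
      (‖∑ d ∈ N.divisors.filter (fun d => 2 ≤ d), b d * (Real.log d : ℂ) * a (N / d)‖ ^ 2
        / Real.log N ^ 2)
  else 0)

theorem mul_log_le_log_mul_loglog {x y : ℝ} (hy : 0 ≤ y) (hyx : y ≤ log x) :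
    y * log y ≤ log x * loglog x := by
  have hlog : log y ≤ loglog x := by
    rcases hy.eq_or_lt with rfl | hy
    · simp [loglog]
    · exact le_max_of_le_right (log_le_log hy hyx)
  calc y * log y ≤ y * loglog x := mul_le_mul_of_nonneg_left hlog hy
    _ ≤ log x * loglog x := mul_le_mul_of_nonneg_right hyx (zero_le_one.trans (le_max_left _ _))

def prodPowersetCard (S : Finset ℕ) (j : ℕ) : Finset ℕ :=
  (S.powersetCard j).image fun T => ∏ p ∈ T, p

section prodPowersetCard

variable {S : Finset ℕ} {j n : ℕ}

theorem mem_prodPowersetCard : n ∈ prodPowersetCard S j ↔ ∃ T ⊆ S, #T = j ∧ ∏ p ∈ T, p = n := by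
  simp [prodPowersetCard, mem_powersetCard, and_assoc]

theorem prod_injOn_powersetCard (hS : ∀ p ∈ S, p.Prime) :
    Set.InjOn (fun T => ∏ p ∈ T, p) (S.powersetCard j : Set (Finset ℕ)) := by
  intro T hT U hU hTU
  simp only [mem_coe, mem_powersetCard] at hT hU
  rw [← Nat.primeFactors_prod fun p hp => hS p (hT.1 hp),
    ← Nat.primeFactors_prod fun p hp => hS p (hU.1 hp)]
  exact congrArg Nat.primeFactors hTU

theorem card_prodPowersetCard (hS : ∀ p ∈ S, p.Prime) :
    #(prodPowersetCard S j) = (#S).choose j := by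
  rw [prodPowersetCard, card_image_of_injOn (prod_injOn_powersetCard hS), card_powersetCard]

theorem pow_le_of_mem_prodPowersetCard {Q : ℝ} (hQ : 0 ≤ Q) (hS : ∀ p ∈ S, Q ≤ p)
    (hn : n ∈ prodPowersetCard S j) : Q ^ j ≤ n := by
  obtain ⟨T, hTS, rfl, rfl⟩ := mem_prodPowersetCard.1 hn
  push_cast
  rw [← prod_const]
  exact prod_le_prod (fun _ _ => hQ) fun p hp => hS p (hTS hp)

theorem two_pow_le_of_mem_prodPowersetCard (hS : ∀ p ∈ S, p.Prime)
    (hn : n ∈ prodPowersetCard S j) : 2 ^ j ≤ n := by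
  exact_mod_cast pow_le_of_mem_prodPowersetCard zero_le_two
    (fun p hp => by exact_mod_cast (hS p hp).two_le) hn

theorem le_pow_of_mem_prodPowersetCard {P : ℕ} (hS : ∀ p ∈ S, p ≤ P)
    (hn : n ∈ prodPowersetCard S j) : n ≤ P ^ j := by
  obtain ⟨T, hTS, rfl, rfl⟩ := mem_prodPowersetCard.1 hn
  exact prod_le_pow_card _ _ _ fun p hp => hS p (hTS hp)

end prodPowersetCard

section TestFunctions

variable {S : Finset ℕ} {P : ℕ} {Q : ℝ} (r s : ℕ)

variable (S) in
noncomputable def testSymbolCoeff (n : ℕ) : ℝ := if n ∈ prodPowersetCard S r then (√n)⁻¹ else 0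

variable (S) in
noncomputable def testFunctionCoeff (n : ℕ) : ℝ := if n ∈ prodPowersetCard S s then 1 else 0

theorem testSymbolCoeff_nonneg (n : ℕ) : 0 ≤ testSymbolCoeff S r n := by
  unfold testSymbolCoeff; split_ifs <;> positivity

theorem testFunctionCoeff_nonneg (n : ℕ) : 0 ≤ testFunctionCoeff S s n := by
  unfold testFunctionCoeff; split_ifs <;> positivity

theorem support_testSymbolCoeff_subset :
    Function.support (fun n => (testSymbolCoeff S r n : ℂ)) ⊆ prodPowersetCard S r := by
  intro n hn
  rw [mem_coe]
  by_contra h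
  simp [testSymbolCoeff, h] at hn

theorem support_testFunctionCoeff_subset :
    Function.support (fun n => (testFunctionCoeff S s n : ℂ)) ⊆ prodPowersetCard S s := by
  intro n hn
  rw [mem_coe]
  by_contra h
  simp [testFunctionCoeff, h] at hn

theorem weightedSymbolNormSq_testSymbol_le {c : ℝ} (hc : 0 ≤ c) (hprime : ∀ p ∈ S, p.Prime)
    (hQ : 1 ≤ Q) (hQS : ∀ p ∈ S, Q ≤ p) :
    weightedSymbolNormSq c (fun n => testSymbolCoeff S r n) ≤
      (#S).choose r * ENNReal.ofReal (exp (-(c * √(r * log Q * log (r * log Q))))) := by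
  rw [weightedSymbolNormSq, tsum_eq_sum (s := prodPowersetCard S r) fun n hn => by
    simp [testSymbolCoeff, hn]]
  rw [← card_prodPowersetCard hprime, ← nsmul_eq_mul, ← sum_const]
  refine sum_le_sum fun n hn => ?_
  split_ifs with hn2
  · have hn0 : (0 : ℝ) < n := by positivity
    have hnorm : ‖(testSymbolCoeff S r n : ℂ)‖ ^ 2 * n = 1 := by
      rw [testSymbolCoeff, if_pos hn, Complex.norm_real, norm_inv, norm_of_nonneg (sqrt_nonneg _),
        inv_pow, sq_sqrt hn0.le, inv_mul_cancel₀ hn0.ne']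
    have hlogn : r * log Q ≤ log n := by
      rw [← log_pow]
      exact log_le_log (by positivity) (pow_le_of_mem_prodPowersetCard (by linarith) hQS hn)
    rw [hnorm, one_mul]
    gcongr ENNReal.ofReal (exp (-(c * √?_)))
    exact mul_log_le_log_mul_loglog (mul_nonneg r.cast_nonneg (log_nonneg hQ)) hlogn
  · exact zero_le

theorem hardyNormSq_testFunction (hprime : ∀ p ∈ S, p.Prime) :
    hardyNormSq (fun n => testFunctionCoeff S s n) = (#S).choose s := by
  rw [hardyNormSq, tsum_eq_sum (s := prodPowersetCard S s) fun n hn => by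
    simp [testFunctionCoeff, hn]]
  rw [← card_prodPowersetCard hprime, ← nsmul_one, ← sum_const]
  refine sum_congr rfl fun n hn => ?_
  have hn1 : 1 ≤ n := Nat.one_le_two_pow.trans (two_pow_le_of_mem_prodPowersetCard hprime hn)
  simp [testFunctionCoeff, hn, hn1]

theorem mul_log_div_sqrt_le_testCoeff_prod (hprime : ∀ p ∈ S, p.Prime) (hQ : 1 ≤ Q)
    (hQS : ∀ p ∈ S, Q ≤ p) (hSP : ∀ p ∈ S, p ≤ P) {R T : Finset ℕ} (hTS : T ⊆ S)
    (hT : #T = r + s) (hRT : R ⊆ T) (hR : #R = r) :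
    r * log Q / √((P : ℝ) ^ r) ≤
      testSymbolCoeff S r (∏ p ∈ R, p) * log (∏ p ∈ R, p : ℕ) *
        testFunctionCoeff S s ((∏ p ∈ T, p) / ∏ p ∈ R, p) := by
  have hmemR : ∏ p ∈ R, p ∈ prodPowersetCard S r :=
    mem_prodPowersetCard.2 ⟨R, hRT.trans hTS, hR, rfl⟩
  have hRpos : 0 < ∏ p ∈ R, p := prod_pos fun p hp => (hprime p (hTS (hRT hp))).pos
  have hmemTR : (∏ p ∈ T, p) / ∏ p ∈ R, p ∈ prodPowersetCard S s := by
    rw [Nat.div_eq_of_eq_mul_left hRpos (prod_sdiff hRT).symm]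
    refine mem_prodPowersetCard.2 ⟨T \ R, sdiff_subset.trans hTS, ?_, rfl⟩
    rw [card_sdiff_of_subset hRT, hT, hR, add_tsub_cancel_left]
  have hlow : r * log Q ≤ log (∏ p ∈ R, p : ℕ) := by
    rw [← log_pow]
    exact log_le_log (by positivity) (pow_le_of_mem_prodPowersetCard (by linarith) hQS hmemR)
  have hup : ((∏ p ∈ R, p : ℕ) : ℝ) ≤ (P : ℝ) ^ r := by
    exact_mod_cast le_pow_of_mem_prodPowersetCard hSP hmemR
  have hRpos' : (0 : ℝ) < (∏ p ∈ R, p : ℕ) := by exact_mod_cast hRpos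
  rw [testSymbolCoeff, if_pos hmemR, testFunctionCoeff, if_pos hmemTR, mul_one, div_eq_inv_mul]
  gcongr
  exact mul_nonneg r.cast_nonneg (log_nonneg hQ)

theorem choose_mul_le_sum_divisors (hprime : ∀ p ∈ S, p.Prime) (hQ : 1 ≤ Q)
    (hQS : ∀ p ∈ S, Q ≤ p) (hSP : ∀ p ∈ S, p ≤ P) (hr : 1 ≤ r) {T : Finset ℕ} (hTS : T ⊆ S)
    (hT : #T = r + s) :
    (r + s).choose r * (r * log Q / √((P : ℝ) ^ r)) ≤
      ∑ d ∈ (∏ p ∈ T, p).divisors.filter (fun d => 2 ≤ d),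
        testSymbolCoeff S r d * log d * testFunctionCoeff S s ((∏ p ∈ T, p) / d) := by
  have hprimeT : ∀ p ∈ T, p.Prime := fun p hp => hprime p (hTS hp)
  have hsub : prodPowersetCard T r ⊆ (∏ p ∈ T, p).divisors.filter (fun d => 2 ≤ d) := by
    intro d hd
    obtain ⟨R, hRT, -, rfl⟩ := mem_prodPowersetCard.1 hd
    simp only [mem_filter, Nat.mem_divisors]
    exact ⟨⟨prod_dvd_prod_of_subset _ _ _ hRT, (prod_pos fun p hp => (hprimeT p hp).pos).ne'⟩,
      (Nat.le_self_pow (by omega) 2).trans (two_pow_le_of_mem_prodPowersetCard hprimeT hd)⟩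
  calc (r + s).choose r * (r * log Q / √((P : ℝ) ^ r))
      = ∑ R ∈ T.powersetCard r, r * log Q / √((P : ℝ) ^ r) := by
        rw [sum_const, card_powersetCard, hT, nsmul_eq_mul]
    _ ≤ ∑ R ∈ T.powersetCard r, testSymbolCoeff S r (∏ p ∈ R, p) * log (∏ p ∈ R, p : ℕ) *
          testFunctionCoeff S s ((∏ p ∈ T, p) / ∏ p ∈ R, p) := by
        refine sum_le_sum fun R hR => ?_
        rw [mem_powersetCard] at hR
        exact mul_log_div_sqrt_le_testCoeff_prod r s hprime hQ hQS hSP hTS hT hR.1 hR.2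
    _ = ∑ d ∈ prodPowersetCard T r,
          testSymbolCoeff S r d * log d * testFunctionCoeff S s ((∏ p ∈ T, p) / d) :=
        (sum_image (f := fun d => testSymbolCoeff S r d * log d *
          testFunctionCoeff S s ((∏ p ∈ T, p) / d)) (prod_injOn_powersetCard hprimeT)).symm
    _ ≤ _ := sum_le_sum_of_subset_of_nonneg hsub fun d _ _ =>
        mul_nonneg (mul_nonneg (testSymbolCoeff_nonneg r d) (log_natCast_nonneg d))
          (testFunctionCoeff_nonneg s _)

theorem choose_mul_le_volterraNormSq (hprime : ∀ p ∈ S, p.Prime) (hQ : 1 ≤ Q)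
    (hQS : ∀ p ∈ S, Q ≤ p) (hSP : ∀ p ∈ S, p ≤ P) (hr : 1 ≤ r) :
    (#S).choose (r + s) * ENNReal.ofReal
        (((r + s).choose r * (r * log Q / √((P : ℝ) ^ r)) / ((r + s) * log P)) ^ 2) ≤
      volterraNormSq (fun n => testSymbolCoeff S r n) (fun n => testFunctionCoeff S s n) := by
  rw [← card_prodPowersetCard hprime, ← nsmul_eq_mul, ← sum_const]
  refine (sum_le_sum fun N hN => ?_).trans (ENNReal.sum_le_tsum (prodPowersetCard S (r + s)))
  have hN2 : 2 ≤ N :=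
    (Nat.le_self_pow (by omega) 2).trans (two_pow_le_of_mem_prodPowersetCard hprime hN)
  have hlogN : 0 < log N := log_pos (by exact_mod_cast hN2)
  have hlogNP : log N ≤ (r + s) * log P := by
    rw [← Nat.cast_add, ← log_pow]
    exact log_le_log (by positivity) (by exact_mod_cast le_pow_of_mem_prodPowersetCard hSP hN)
  obtain ⟨T, hTS, hT, rfl⟩ := mem_prodPowersetCard.1 hN
  have hsum := choose_mul_le_sum_divisors r s hprime hQ hQS hSP hr hTS hT
  rw [if_pos hN2, ← div_pow]
  gcongr
  · have := mul_nonneg r.cast_nonneg (log_nonneg hQ)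
    exact div_nonneg (by positivity) (hlogN.le.trans hlogNP)
  · refine hsum.trans ((le_abs_self _).trans_eq ?_)
    rw [← Real.norm_eq_abs, ← Complex.norm_real]
    push_cast
    rfl

theorem ofReal_mul_weightedSymbolNormSq_mul_hardyNormSq_lt {c C : ℝ} (hc : 0 ≤ c) (hC : 0 < C)
    (hprime : ∀ p ∈ S, p.Prime) (hQ : 1 ≤ Q) (hQS : ∀ p ∈ S, Q ≤ p) (hSP : ∀ p ∈ S, p ≤ P)
    (hr : 1 ≤ r)
    (hlt : C * ((#S).choose r * exp (-(c * √(r * log Q * log (r * log Q))))) * (#S).choose s <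
      (#S).choose (r + s) *
        (((r + s).choose r * (r * log Q / √((P : ℝ) ^ r)) / ((r + s) * log P)) ^ 2)) :
    ENNReal.ofReal C * weightedSymbolNormSq c (fun n => testSymbolCoeff S r n) *
        hardyNormSq (fun n => testFunctionCoeff S s n) <
      volterraNormSq (fun n => testSymbolCoeff S r n) (fun n => testFunctionCoeff S s n) := by
  calc ENNReal.ofReal C * weightedSymbolNormSq c _ * hardyNormSq _
      ≤ ENNReal.ofReal C * ((#S).choose r *
          ENNReal.ofReal (exp (-(c * √(r * log Q * log (r * log Q)))))) * (#S).choose s := by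
        rw [hardyNormSq_testFunction s hprime]
        gcongr
        exact weightedSymbolNormSq_testSymbol_le r hc hprime hQ hQS
    _ < (#S).choose (r + s) * ENNReal.ofReal
          (((r + s).choose r * (r * log Q / √((P : ℝ) ^ r)) / ((r + s) * log P)) ^ 2) := by
        rw [← ENNReal.ofReal_natCast, ← ENNReal.ofReal_natCast, ← ENNReal.ofReal_natCast,
          ← ENNReal.ofReal_mul (by positivity), ← ENNReal.ofReal_mul hC.le,
          ← ENNReal.ofReal_mul (by positivity), ← ENNReal.ofReal_mul (by positivity)]
        exact (ENNReal.ofReal_lt_ofReal_iff_of_nonneg (by positivity)).2 hlt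
    _ ≤ _ := choose_mul_le_volterraNormSq r s hprime hQ hQS hSP hr

end TestFunctions

theorem Nat.choose_succ_le_two_mul_choose {m s : ℕ} (h : 2 * s ≤ m + 1) :
    (m + 1).choose s ≤ 2 * m.choose s := by
  refine Nat.le_of_mul_le_mul_right ?_ m.succ_pos
  calc (m + 1).choose s * (m + 1) ≤ (m + 1).choose s * (2 * (m + 1 - s)) := by gcongr; omega
    _ = 2 * m.choose s * (m + 1) := by rw [mul_assoc, Nat.choose_mul_succ_eq]; ring

theorem Nat.choose_le_two_pow_mul_choose_sub {k r s : ℕ} (h : 2 * (r + s) ≤ k) :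
    k.choose s ≤ 2 ^ r * (k - r).choose s := by
  induction r with
  | zero => simp
  | succ r ih =>
    have hsucc : k - r = k - (r + 1) + 1 := by omega
    calc k.choose s ≤ 2 ^ r * (k - r).choose s := ih (by omega)
      _ ≤ 2 ^ r * (2 * (k - (r + 1)).choose s) := by
          rw [hsucc]; gcongr; exact Nat.choose_succ_le_two_mul_choose (by omega)
      _ = 2 ^ (r + 1) * (k - (r + 1)).choose s := by ring

theorem Nat.choose_mul_choose_le {k r s : ℕ} (h : 2 * (r + s) ≤ k) :
    k.choose r * k.choose s ≤ 2 ^ r * (k.choose (r + s) * (r + s).choose r) := by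
  rw [Nat.choose_mul (Nat.le_add_right r s), add_tsub_cancel_left]
  calc k.choose r * k.choose s ≤ k.choose r * (2 ^ r * (k - r).choose s) := by
        gcongr; exact Nat.choose_le_two_pow_mul_choose_sub h
    _ = 2 ^ r * (k.choose r * (k - r).choose s) := by ring

theorem div_pow_le_choose_add (r s : ℕ) : ((s : ℝ) / r) ^ r ≤ (r + s).choose r := by
  have h := Nat.pow_le_choose (α := ℝ) r (r + s)
  rw [show r + s + 1 - r = s + 1 by omega] at h
  refine le_trans ?_ h
  rw [div_pow]
  have hfac : (0 : ℝ) < r.factorial := by exact_mod_cast r.factorial_pos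
  gcongr
  · linarith
  · exact_mod_cast Nat.factorial_le_pow r

theorem sqrt_two_mul_le_sqrt_mul_log {δ r : ℝ} (hδ : 0 < δ) (hr : 0 < r) (hδr : 1 ≤ δ * log r) :
    √(2 * δ) * (r * log r) ≤ √(r * (δ * (r * log r)) * log (r * (δ * (r * log r)))) := by
  have hlogr : 0 < log r := pos_of_mul_pos_right (one_pos.trans_le hδr) hδ.le
  set y := r * (δ * (r * log r))
  have hy : r ^ 2 ≤ y := by nlinarith [sq_nonneg r]
  have hlogy : 2 * log r ≤ log y := by
    calc 2 * log r = log (r ^ 2) := by rw [log_pow]; norm_num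
      _ ≤ log y := log_le_log (by positivity) hy
  rw [← sqrt_sq (by positivity : 0 ≤ r * log r), ← sqrt_mul (by positivity)]
  apply sqrt_le_sqrt
  calc 2 * δ * (r * log r) ^ 2 = y * (2 * log r) := by ring
    _ ≤ y * log y := mul_le_mul_of_nonneg_left hlogy (by positivity)

theorem eventually_mul_pow_mul_log_lt_exp {K A μ : ℝ} (hK : 0 < K) (hA : 0 < A) (hμ : 0 < μ) :
    ∀ᶠ r : ℕ in atTop, K * (A * log r) ^ r < exp (μ * (r * log r)) := by
  have hlin : ∀ᶠ t : ℝ in atTop, A * t ≤ exp (μ * t) / 2 := by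
    filter_upwards [(isLittleO_pow_exp_pos_mul_atTop 1 hμ).bound (by positivity : 0 < 1 / (2 * A)),
      eventually_ge_atTop 0] with t ht ht0
    rw [pow_one, norm_of_nonneg ht0, norm_of_nonneg (exp_pos _).le] at ht
    calc A * t ≤ A * (1 / (2 * A) * exp (μ * t)) := by gcongr
      _ = exp (μ * t) / 2 := by field_simp
  have hlog := tendsto_log_atTop.comp tendsto_natCast_atTop_atTop
  filter_upwards [hlog.eventually hlin, hlog.eventually_ge_atTop 0,
    (tendsto_pow_atTop_atTop_of_one_lt one_lt_two).eventually_gt_atTop K] with r hr hr0 hK2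
  simp only [Function.comp_apply] at hr hr0
  calc K * (A * log r) ^ r ≤ K * (exp (μ * log r) / 2) ^ r := by gcongr
    _ = K / 2 ^ r * exp (μ * (r * log r)) := by
        rw [div_pow, ← exp_nat_mul]; ring_nf
    _ < 1 * exp (μ * (r * log r)) := by
        gcongr
        exact (div_lt_one (by positivity)).2 hK2
    _ = exp (μ * (r * log r)) := one_mul _

theorem isLittleO_rpow_mul_log_id {δ : ℝ} (hδ : δ < 1) :
    (fun x : ℝ => x ^ δ * log x) =o[atTop] id := by
  refine ((isBigO_refl (fun x : ℝ => x ^ δ) atTop).mul_isLittleO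
    (isLittleO_log_rpow_atTop (sub_pos.2 hδ))).congr' EventuallyEq.rfl ?_
  filter_upwards [eventually_gt_atTop 0] with x hx
  rw [← rpow_add hx, add_sub_cancel, rpow_one, id]

theorem card_primesLE_filter_le {P : ℕ} {x : ℝ} (hx : 0 ≤ x) :
    #{p ∈ Nat.primesLE P | ((p : ℕ) : ℝ) ≤ x} ≤ x := by
  calc (#{p ∈ Nat.primesLE P | ((p : ℕ) : ℝ) ≤ x} : ℝ) ≤ #(Icc 1 ⌊x⌋₊) := by
        gcongr
        intro p hp
        simp only [mem_filter, Nat.mem_primesLE] at hp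
        exact mem_Icc.2 ⟨hp.1.2.one_le, Nat.le_floor hp.2⟩
    _ ≤ x := by
        rw [Nat.card_Icc, add_tsub_cancel_right]
        exact Nat.floor_le hx

theorem eventually_div_le_card_primesLE_filter_rpow_lt {δ : ℝ} (hδ0 : 0 ≤ δ) (hδ1 : δ < 1) :
    ∀ᶠ P : ℕ in atTop,
      (P : ℝ) / (3 * log P) ≤ #{p ∈ Nat.primesLE P | (P : ℝ) ^ δ < ((p : ℕ) : ℝ)} := by
  have hlog2 : 0 < log 2 - 1 / 3 := by linarith [log_two_gt_d9]
  have hsmall : ∀ᶠ x : ℝ in atTop, 3 * (x ^ δ * log x) ≤ (log 2 - 1 / 3) * x := by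
    filter_upwards [(isLittleO_rpow_mul_log_id hδ1).bound (by positivity : 0 < (log 2 - 1 / 3) / 3),
      eventually_ge_atTop 1] with x hx hx1
    rw [norm_of_nonneg (mul_nonneg (rpow_nonneg (by linarith) _) (log_nonneg hx1)), id,
      norm_of_nonneg (by linarith)] at hx
    linarith
  filter_upwards [tendsto_natCast_atTop_atTop.eventually hsmall, eventually_ge_atTop 2]
    with P hP hP2
  have hP2' : (2 : ℝ) ≤ P := by exact_mod_cast hP2
  have hlogP : 0 < log P := log_pos (by linarith)
  have hcount : (Nat.primeCounting P : ℝ) ≤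
      #{p ∈ Nat.primesLE P | (P : ℝ) ^ δ < ((p : ℕ) : ℝ)} + (P : ℝ) ^ δ := by
    rw [← Nat.primesLE_card_eq_primeCounting,
      ← card_filter_add_card_filter_not (fun p : ℕ => (P : ℝ) ^ δ < p)]
    simp only [not_lt]
    push_cast
    linarith [card_primesLE_filter_le (P := P) (x := (P : ℝ) ^ δ) (by positivity)]
  have hlogsucc : log (P + 1) ≤ 2 * ((P : ℝ) ^ δ * log P) := by
    calc log (P + 1) ≤ log ((P : ℝ) ^ 2) := log_le_log (by positivity) (by nlinarith)
      _ = 2 * log P := by rw [log_pow]; norm_num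
      _ ≤ 2 * ((P : ℝ) ^ δ * log P) := by
          nlinarith [one_le_rpow (by linarith : (1 : ℝ) ≤ P) hδ0]
  calc (P : ℝ) / (3 * log P) = P / 3 / log P := by ring
    _ ≤ (P * log 2 - log (P + 1) - (P : ℝ) ^ δ * log P) / log P := by gcongr; linarith
    _ = (P * log 2 - log (P + 1)) / log P - (P : ℝ) ^ δ := by field_simp
    _ ≤ Nat.primeCounting P - (P : ℝ) ^ δ := by gcongr; exact Chebyshev.pi_ge P
    _ ≤ _ := by linarith

theorem exists_lt_one_four_lt_mul_sqrt {c : ℝ} (hc : 2 * √2 < c) :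
    ∃ δ : ℝ, 0 < δ ∧ δ < 1 ∧ 4 < c * √(2 * δ) := by
  have hc0 : 0 < c := lt_of_le_of_lt (by positivity) hc
  have hc8 : 8 < c ^ 2 := by nlinarith [sq_sqrt (zero_le_two : (0 : ℝ) ≤ 2), sqrt_nonneg 2]
  obtain ⟨δ, hδc, hδ1⟩ := exists_between ((div_lt_one (by positivity)).2 hc8)
  refine ⟨δ, lt_of_le_of_lt (by positivity) hδc, hδ1, ?_⟩
  rw [← sqrt_sq hc0.le, ← sqrt_mul (sq_nonneg c), lt_sqrt zero_le_four]
  rw [div_lt_iff₀ (by positivity)] at hδc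
  linarith

theorem eighteen_mul_cube_le_self_pow {r : ℕ} (hr : 6 ≤ r) : 18 * r ^ 3 ≤ r ^ r := by
  calc 18 * r ^ 3 ≤ r ^ 3 * r ^ (r - 3) := by
        rw [mul_comm]
        gcongr
        calc 18 ≤ 6 ^ 3 := by norm_num
          _ ≤ r ^ 3 := by gcongr
          _ ≤ r ^ (r - 3) := Nat.pow_le_pow_right (by omega) (by omega)
    _ = r ^ r := by rw [← pow_add]; congr 1; omega

theorem two_mul_le_and_pow_le_mul_log_mul {r k : ℕ} (hr : 6 ≤ r)
    (hk : (r : ℝ) ^ r ≤ 3 * (r * log r) * k) :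
    2 * (r + (k / 2 - r)) ≤ k ∧ (r : ℝ) ^ r ≤ 12 * (r * log r) * ((k / 2 - r : ℕ) : ℝ) := by
  have hr0 : (0 : ℝ) < r := by positivity
  have hL : r * log r ≤ (r : ℝ) ^ 2 := by
    rw [sq]; gcongr; exact (log_le_sub_one_of_pos hr0).trans (by linarith)
  have hbig : 6 * (r * log r) * (2 * r + 1) ≤ (r : ℝ) ^ r := by
    have h18 : (18 * r ^ 3 : ℝ) ≤ (r : ℝ) ^ r := by exact_mod_cast eighteen_mul_cube_le_self_pow hr
    have hr1 : (1 : ℝ) ≤ r := by exact_mod_cast (show 1 ≤ r by omega)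
    nlinarith
  have hLpos : 0 < r * log r := mul_pos hr0 (log_pos (by exact_mod_cast (show 1 < r by omega)))
  have hkr : 2 * r ≤ k := by
    have : 3 * (r * log r) * (2 * r) ≤ 3 * (r * log r) * k := by nlinarith
    exact_mod_cast le_of_mul_le_mul_left this (by positivity)
  refine ⟨by omega, ?_⟩
  have hs : (k : ℝ) ≤ 2 * ((k / 2 - r : ℕ) : ℝ) + 2 * r + 1 := by
    have : k ≤ 2 * (k / 2 - r) + 2 * r + 1 := by omega
    exact_mod_cast this
  nlinarith [mul_le_mul_of_nonneg_left hs hLpos.le]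

theorem mul_exp_mul_two_pow_lt_choose {C δ x : ℝ} {r s : ℕ} (hδ : 0 < δ) (hr : 1 ≤ r)
    (hlogr : 0 < log r) (hs : (r : ℝ) ^ r ≤ 12 * (r * log r) * s) (hrs : r + s ≤ r ^ r)
    (hgap : C * (24 * log r) ^ r < δ ^ 2 * exp ((x - 4) * (r * log r))) :
    C * exp (-(x * (r * log r))) * 2 ^ r <
      (r + s).choose r * (δ * r / (r + s)) ^ 2 / ((r : ℝ) ^ r) ^ r := by
  have hr0 : (0 : ℝ) < r := by exact_mod_cast hr
  have hR : exp (r * log r) = (r : ℝ) ^ r := by rw [exp_nat_mul, exp_log hr0]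
  have hRpos : (0 : ℝ) < (r : ℝ) ^ r := by positivity
  have hrsR : (r : ℝ) + s ≤ (r : ℝ) ^ r := by exact_mod_cast hrs
  have hδR : δ / (r : ℝ) ^ r ≤ δ * r / (r + s) := by
    have hr1 : (1 : ℝ) ≤ r := by exact_mod_cast hr
    rw [div_le_div_iff₀ hRpos (by positivity)]
    calc δ * (r + s) ≤ δ * (r : ℝ) ^ r := by gcongr
      _ ≤ δ * r * (r : ℝ) ^ r := by gcongr; exact le_mul_of_one_le_right hδ.le hr1
  have hsR : 1 / (12 * r * (r * log r)) ≤ s / (r * (r : ℝ) ^ r) := by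
    rw [div_le_div_iff₀ (by positivity) (by positivity)]
    nlinarith
  -- As `(12 r · r log r) ^ r = (r ^ r) ^ 2 (12 log r) ^ r`, each factor of the third line
  -- costs `exp (-2 r log r)`.
  calc C * exp (-(x * (r * log r))) * 2 ^ r
      = C * (24 * log r) ^ r * (exp (-(x * (r * log r))) / (12 * log r) ^ r) := by
        rw [show 24 * log r = 2 * (12 * log r) by ring, mul_pow]
        field_simp
    _ < δ ^ 2 * exp ((x - 4) * (r * log r)) * (exp (-(x * (r * log r))) / (12 * log r) ^ r) := by
        gcongr
    _ = (δ / (r : ℝ) ^ r) ^ 2 * (1 / (12 * r * (r * log r))) ^ r := by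
        rw [mul_div_assoc', mul_assoc, ← exp_add, show (x - 4) * (r * log r) + -(x * (r * log r)) =
          -(((4 : ℕ) : ℝ) * (r * log r)) by push_cast; ring, exp_neg, exp_nat_mul, hR, one_div_pow,
          show (12 * r * (r * log r)) ^ r = ((r : ℝ) ^ r) ^ 2 * (12 * log r) ^ r by ring]
        field_simp
    _ ≤ (δ * r / (r + s)) ^ 2 * (s / (r * (r : ℝ) ^ r)) ^ r := by
        gcongr
    _ = ((s : ℝ) / r) ^ r * (δ * r / (r + s)) ^ 2 / ((r : ℝ) ^ r) ^ r := by
        rw [mul_comm (r : ℝ), ← div_div, div_pow (_ / _)]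
        ring
    _ ≤ (r + s).choose r * (δ * r / (r + s)) ^ 2 / ((r : ℝ) ^ r) ^ r := by
        gcongr
        exact div_pow_le_choose_add r s

theorem const_mul_choose_mul_choose_lt_choose_mul_sq {c C δ Q : ℝ} {k r s : ℕ} (hc : 0 ≤ c)
    (hC : 0 ≤ C) (hδ : 0 < δ) (hr : 1 ≤ r) (hδr : 1 ≤ δ * log r) (hQ : log Q = δ * (r * log r))
    (hk : 2 * (r + s) ≤ k)
    (hs : (r : ℝ) ^ r ≤ 12 * (r * log r) * s) (hrs : r + s ≤ r ^ r)
    (hgap : C * (24 * log r) ^ r < δ ^ 2 * exp ((c * √(2 * δ) - 4) * (r * log r))) :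
    C * (k.choose r * exp (-(c * √(r * log Q * log (r * log Q))))) * k.choose s <
      k.choose (r + s) * (((r + s).choose r * (r * log Q / √(((r ^ r : ℕ) : ℝ) ^ r)) /
        ((r + s) * log (r ^ r : ℕ))) ^ 2) := by
  have hr0 : (0 : ℝ) < r := by exact_mod_cast hr
  have hlogr : 0 < log r := pos_of_mul_pos_right (one_pos.trans_le hδr) hδ.le
  have hE : exp (-(c * √(r * log Q * log (r * log Q)))) ≤
      exp (-(c * √(2 * δ) * (r * log r))) := by
    rw [hQ, mul_assoc c]
    gcongr
    exact sqrt_two_mul_le_sqrt_mul_log hδ hr0 hδr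
  have hbinom : (k.choose r : ℝ) * k.choose s ≤ 2 ^ r * (k.choose (r + s) * (r + s).choose r) := by
    exact_mod_cast Nat.choose_mul_choose_le hk
  have hchoose : (0 : ℝ) < k.choose (r + s) * (r + s).choose r := by
    have := Nat.choose_pos (show r + s ≤ k by omega)
    have := Nat.choose_pos (show r ≤ r + s by omega)
    positivity
  calc C * (k.choose r * exp (-(c * √(r * log Q * log (r * log Q))))) * k.choose s
      = C * exp (-(c * √(r * log Q * log (r * log Q)))) * (k.choose r * k.choose s) := by ring
    _ ≤ C * exp (-(c * √(2 * δ) * (r * log r))) *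
          (2 ^ r * (k.choose (r + s) * (r + s).choose r)) := by
        gcongr
    _ = k.choose (r + s) * (r + s).choose r *
          (C * exp (-(c * √(2 * δ) * (r * log r))) * 2 ^ r) := by
        ring
    _ < k.choose (r + s) * (r + s).choose r *
          ((r + s).choose r * (δ * r / (r + s)) ^ 2 / ((r : ℝ) ^ r) ^ r) := by
        gcongr
        exact mul_exp_mul_two_pow_lt_choose hδ hr hlogr hs hrs hgap
    _ = _ := by
        push_cast
        have hsq : √(((r : ℝ) ^ r) ^ r) ^ 2 = ((r : ℝ) ^ r) ^ r := sq_sqrt (by positivity)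
        rw [hQ, log_pow]
        simp only [div_pow, mul_pow, hsq]
        field_simp

theorem exists_primes_const_mul_choose_lt {c C : ℝ} (hc : 2 * √2 < c) (hC : 0 < C) :
    ∃ (S : Finset ℕ) (P : ℕ) (Q : ℝ) (r s : ℕ), (∀ p ∈ S, p.Prime) ∧ 1 ≤ Q ∧
      (∀ p ∈ S, Q ≤ p) ∧ (∀ p ∈ S, p ≤ P) ∧ 1 ≤ r ∧ s ≤ #S ∧
      C * ((#S).choose r * exp (-(c * √(r * log Q * log (r * log Q))))) * (#S).choose s <
        (#S).choose (r + s) *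
          (((r + s).choose r * (r * log Q / √((P : ℝ) ^ r)) / ((r + s) * log P)) ^ 2) := by
  obtain ⟨δ, hδ0, hδ1, hcδ⟩ := exists_lt_one_four_lt_mul_sqrt hc
  have hlog := tendsto_log_atTop.comp tendsto_natCast_atTop_atTop
  have hpow : Tendsto (fun r : ℕ => r ^ r) atTop atTop := by
    refine tendsto_atTop_mono (fun r => ?_) tendsto_id
    rcases r with _ | r
    · exact Nat.zero_le _
    · exact Nat.le_self_pow (by omega) _
  obtain ⟨r, hr6, hδr, hprimes, hgap⟩ := ((eventually_ge_atTop 6).and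
    ((hlog.eventually_ge_atTop (1 / δ)).and
    ((hpow.eventually (eventually_div_le_card_primesLE_filter_rpow_lt hδ0.le hδ1)).and
    (eventually_mul_pow_mul_log_lt_exp (K := C / δ ^ 2) (A := 24) (by positivity) (by norm_num)
      (sub_pos.2 hcδ))))).exists
  simp only [Function.comp_apply] at hδr hprimes
  set P := r ^ r
  set S := {p ∈ Nat.primesLE P | (P : ℝ) ^ δ < ((p : ℕ) : ℝ)}
  have hP : (P : ℝ) = (r : ℝ) ^ r := by push_cast [P]; rfl
  have hlogP : log P = r * log r := by rw [hP, log_pow]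
  have hP1 : 1 ≤ P := Nat.one_le_pow _ _ (by omega)
  have hSP : ∀ p ∈ S, p ≤ P := fun p hp => Nat.le_of_mem_primesLE (mem_filter.1 hp).1
  have hcard : #S ≤ P + 1 := calc
    #S ≤ #(Nat.primesLE P) := card_filter_le _ _
    _ ≤ #(range (P + 1)) := card_filter_le _ _
    _ = P + 1 := card_range _
  have hlogr : 0 < log r := (one_div_pos.2 hδ0).trans_le hδr
  obtain ⟨hk, hs⟩ := two_mul_le_and_pow_le_mul_log_mul (k := #S) hr6 (by
    rwa [hlogP, hP, div_le_iff₀ (by positivity), mul_comm] at hprimes)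
  refine ⟨S, P, (P : ℝ) ^ δ, r, #S / 2 - r,
    fun p hp => Nat.prime_of_mem_primesLE (mem_filter.1 hp).1,
    one_le_rpow (by exact_mod_cast hP1) hδ0.le, fun p hp => (mem_filter.1 hp).2.le, hSP, by omega,
    by omega, ?_⟩
  refine const_mul_choose_mul_choose_lt_choose_mul_sq
    ((by positivity : (0 : ℝ) ≤ 2 * √2).trans hc.le) hC.le hδ0 (by omega)
    ((div_le_iff₀' hδ0).1 hδr) (by rw [log_rpow (by positivity), hlogP]) hk hs (by omega) ?_
  rw [div_mul_eq_mul_div, div_lt_iff₀ (by positivity)] at hgap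
  linarith

/-- for `c > 2√2` the inequality
`‖T_g f‖² ≤ C (∑_{n≥2} |b_n|² n e^{-c√(log n log₂ n)}) ‖f‖²` cannot hold for all symbols:
for every `C > 0` there are finitely supported `b` (supported on `n ≥ 2`) and `a`
(not identically zero) violating it. -/
theorem volterra_general_weight_sharp (c : ℝ) (hc : 2 * Real.sqrt 2 < c)
    (C : ℝ) (hC : 0 < C) :
    ∃ b a : ℕ → ℂ,
      (Function.support b).Finite ∧ (∀ n, b n ≠ 0 → 2 ≤ n) ∧
      (Function.support a).Finite ∧ (∃ n, 1 ≤ n ∧ a n ≠ 0) ∧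
      ENNReal.ofReal C *
          (∑' n : ℕ, (if 2 ≤ n then
              ENNReal.ofReal
                (‖b n‖ ^ 2 * n * Real.exp (-(c * Real.sqrt (Real.log n * loglog n))))
            else 0)) *
          (∑' n : ℕ, (if 1 ≤ n then ENNReal.ofReal (‖a n‖ ^ 2) else 0))
        < ∑' N : ℕ, (if 2 ≤ N then
            ENNReal.ofReal
              (‖∑ d ∈ N.divisors.filter (fun d => 2 ≤ d),
                  b d * (Real.log d : ℂ) * a (N / d)‖ ^ 2 / Real.log N ^ 2)
          else 0) := by
  obtain ⟨S, P, Q, r, s, hprime, hQ, hQS, hSP, hr, hs, hlt⟩ :=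
    exists_primes_const_mul_choose_lt hc hC
  obtain ⟨T, hT⟩ := powersetCard_nonempty.2 hs
  have hTmem : ∏ p ∈ T, p ∈ prodPowersetCard S s := mem_image_of_mem _ hT
  refine ⟨fun n => testSymbolCoeff S r n, fun n => testFunctionCoeff S s n,
    (prodPowersetCard S r).finite_toSet.subset (support_testSymbolCoeff_subset r),
    fun n hn => (Nat.le_self_pow (by omega) 2).trans (two_pow_le_of_mem_prodPowersetCard hprime
      (support_testSymbolCoeff_subset r hn)),
    (prodPowersetCard S s).finite_toSet.subset (support_testFunctionCoeff_subset s),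
    ⟨_, Nat.one_le_two_pow.trans (two_pow_le_of_mem_prodPowersetCard hprime hTmem),
      by simp [testFunctionCoeff, hTmem]⟩, ?_⟩
  exact ofReal_mul_weightedSymbolNormSq_mul_hardyNormSq_lt r s
    ((by positivity : (0 : ℝ) ≤ 2 * √2).trans hc.le) hC hprime hQ hQS hSP hr hlt
end

section
/- Let 𝒩 ⊂ {2, 3, 4, …} be a set of integers that are pairwise coprime, i.e. gcd(m, n) = 1 whenever m, n ∈ 𝒩 and m ≠ n, and let (b_n)_{n∈𝒩} be complex numbers with ∑_{n∈𝒩} |b_n|² < ∞. Then the operator norm of the Volterra operator T_g with symbol g(s) = ∑_{n∈𝒩} b_n n^{-s} on H² equals ‖g‖_{H²}: the supremum of ∑_{N≥2} (log N)^{-2} |∑_{n∈𝒩, n∣N} b_n (log n) a_{N/n}|² over all complex sequences (a_j)_{j≥1} with ∑_{j≥1}|a_j|² ≤ 1 is exactly ∑_{n∈𝒩} |b_n|². -/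
/-!
The divisors `d ∣ N` with `b d ≠ 0` are pairwise coprime, so their product divides `N` and
`∑ log d ≤ log N`. Cauchy–Schwarz with weights `log d` then gives
`|∑_{d ∣ N} b_d log d a_{N/d}|² ≤ log N ∑_{d ∣ N} log d |b_d a_{N/d}|²`. Dividing by `(log N)²`,
summing over `N = d m` and using `log d ≤ log (d m)` bounds `‖T_g f‖²` by `‖g‖² ‖f‖²`.
Equality is attained at `f = 1`, for which `T_g 1 = g`.
-/

open scoped ENNReal
open Finset

theorem Nat.sum_log_le_log_of_pairwise_coprime {s : Finset ℕ} {N : ℕ} (hN : N ≠ 0)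
    (hs : (s : Set ℕ).Pairwise Nat.Coprime) (hdvd : ∀ d ∈ s, d ∣ N) :
    ∑ d ∈ s, Real.log d ≤ Real.log N := by
  have hpos : ∀ d ∈ s, 0 < d := fun d hd =>
    Nat.pos_of_dvd_of_pos (hdvd d hd) (Nat.pos_of_ne_zero hN)
  have hprod : ∏ d ∈ s, d ∣ N :=
    prod_dvd_of_isRelPrime (hs.mono' fun _ _ => Nat.coprime_iff_isRelPrime.mp) hdvd
  rw [← Real.log_prod fun d hd => by exact_mod_cast (hpos d hd).ne', ← Nat.cast_prod]
  exact Real.log_le_log (by exact_mod_cast prod_pos hpos)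
    (by exact_mod_cast Nat.le_of_dvd (Nat.pos_of_ne_zero hN) hprod)

theorem norm_sum_smul_sq_le {ι E : Type*} [SeminormedAddCommGroup E] [NormedSpace ℝ E]
    (s : Finset ι) {w : ι → ℝ} (hw : ∀ i ∈ s, 0 ≤ w i) (z : ι → E) :
    ‖∑ i ∈ s, w i • z i‖ ^ 2 ≤ (∑ i ∈ s, w i) * ∑ i ∈ s, w i * ‖z i‖ ^ 2 := by
  have hnorm : ∀ i ∈ s, ‖w i • z i‖ = w i * ‖z i‖ := fun i hi => by
    rw [norm_smul, Real.norm_of_nonneg (hw i hi)]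
  calc ‖∑ i ∈ s, w i • z i‖ ^ 2 ≤ (∑ i ∈ s, w i * ‖z i‖) ^ 2 := by
        gcongr
        exact (norm_sum_le _ _).trans_eq (sum_congr rfl hnorm)
    _ ≤ _ := sum_sq_le_sum_mul_sum_of_sq_le_mul s hw
        (fun i hi => mul_nonneg (hw i hi) (sq_nonneg _)) fun i _ => le_of_eq (by ring)

theorem tsum_preimage_mul_eq_sum_divisors {α : Type*} [AddCommMonoid α] [TopologicalSpace α]
    (f : ℕ → ℕ → α) {N : ℕ} (hN : N ≠ 0) :
    ∑' p : (fun p : ℕ × ℕ => p.1 * p.2) ⁻¹' {N}, f p.1.1 p.1.2 = ∑ d ∈ N.divisors, f d (N / d) := by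
  rw [show (fun p : ℕ × ℕ => p.1 * p.2) ⁻¹' {N} = N.divisorsAntidiagonal by ext; simp [hN],
    tsum_subtype' N.divisorsAntidiagonal fun p => f p.1 p.2, Nat.sum_divisorsAntidiagonal]

/-- The `N`-th Dirichlet coefficient of `-g' f` for `g = ∑ b n n^{-s}` and `f = ∑ a n n^{-s}`;
dividing it by `log N` gives that of `T_g f`. -/
noncomputable def negDerivMulCoeff (b a : ℕ → ℂ) (N : ℕ) : ℂ :=
  ∑ d ∈ N.divisors, b d * (Real.log d : ℂ) * a (N / d)

theorem negDerivMulCoeff_single_one (b : ℕ → ℂ) (N : ℕ) :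
    negDerivMulCoeff b (Pi.single 1 1) N = b N * Real.log N := by
  rw [negDerivMulCoeff, sum_eq_single N]
  · rcases N.eq_zero_or_pos with rfl | hN
    · simp
    · simp [Nat.div_self hN]
  · intro d hd hdN
    have : N / d ≠ 1 := fun h => hdN (Nat.eq_of_dvd_of_div_eq_one (Nat.dvd_of_mem_divisors hd) h)
    simp [this]
  · intro hN
    simp [show N = 0 by simpa using hN]

theorem norm_negDerivMulCoeff_sq_le {b : ℕ → ℂ} (hb : (Function.support b).Pairwise Nat.Coprime)
    (a : ℕ → ℂ) {N : ℕ} (hN : N ≠ 0) :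
    ‖negDerivMulCoeff b a N‖ ^ 2 ≤
      Real.log N * ∑ d ∈ N.divisors, Real.log d * ‖b d * a (N / d)‖ ^ 2 := by
  classical
  set s := N.divisors.filter (b · ≠ 0)
  have hlog : ∀ d : ℕ, 0 ≤ Real.log d := fun d => Real.log_natCast_nonneg d
  have hcoeff : negDerivMulCoeff b a N = ∑ d ∈ s, Real.log d • (b d * a (N / d)) := by
    rw [negDerivMulCoeff, sum_filter_of_ne fun d _ h => by contrapose! h; simp [h]]
    refine sum_congr rfl fun d _ => ?_
    rw [Complex.real_smul]
    ring
  calc ‖negDerivMulCoeff b a N‖ ^ 2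
      ≤ (∑ d ∈ s, Real.log d) * ∑ d ∈ s, Real.log d * ‖b d * a (N / d)‖ ^ 2 :=
        hcoeff ▸ norm_sum_smul_sq_le s (fun d _ => hlog d) _
    _ ≤ Real.log N * ∑ d ∈ N.divisors, Real.log d * ‖b d * a (N / d)‖ ^ 2 := by
        gcongr ?_ * ?_
        · exact Nat.sum_log_le_log_of_pairwise_coprime hN
            (hb.mono fun d hd => (mem_filter.1 hd).2)
            fun d hd => Nat.dvd_of_mem_divisors (mem_filter.1 hd).1
        · exact sum_le_sum_of_subset_of_nonneg (filter_subset _ _)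
            fun d _ _ => mul_nonneg (hlog d) (sq_nonneg _)

theorem norm_negDerivMulCoeff_sq_div_le {b : ℕ → ℂ}
    (hb : (Function.support b).Pairwise Nat.Coprime) (a : ℕ → ℂ) {N : ℕ} (hN : 2 ≤ N) :
    ‖negDerivMulCoeff b a N‖ ^ 2 / Real.log N ^ 2 ≤
      ∑ d ∈ N.divisors, Real.log d / Real.log N * ‖b d * a (N / d)‖ ^ 2 := by
  have hlogN : 0 < Real.log N := Real.log_pos (by exact_mod_cast hN)
  calc ‖negDerivMulCoeff b a N‖ ^ 2 / Real.log N ^ 2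
      ≤ Real.log N * (∑ d ∈ N.divisors, Real.log d * ‖b d * a (N / d)‖ ^ 2) /
          Real.log N ^ 2 :=
        div_le_div_of_nonneg_right (norm_negDerivMulCoeff_sq_le hb a (by omega)) (sq_nonneg _)
    _ = _ := by
        simp only [sq, mul_div_mul_left _ _ hlogN.ne', sum_div, div_mul_eq_mul_div]

theorem tsum_volterra_le {b : ℕ → ℂ} (hb : (Function.support b).Pairwise Nat.Coprime)
    (a : ℕ → ℂ) :
    ∑' N : ℕ, (if 2 ≤ N then
        ENNReal.ofReal (‖negDerivMulCoeff b a N‖ ^ 2 / Real.log N ^ 2) else 0) ≤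
      (∑' n, ENNReal.ofReal (‖b n‖ ^ 2)) *
        ∑' n : ℕ, if 1 ≤ n then ENNReal.ofReal (‖a n‖ ^ 2) else 0 := by
  set H : ℕ × ℕ → ℝ≥0∞ := fun p =>
    ENNReal.ofReal (Real.log p.1 / Real.log (p.1 * p.2 : ℕ) * ‖b p.1 * a p.2‖ ^ 2)
  have hfiber (N : ℕ) :
      (if 2 ≤ N then ENNReal.ofReal (‖negDerivMulCoeff b a N‖ ^ 2 / Real.log N ^ 2) else 0) ≤
        ∑' p : (fun p : ℕ × ℕ => p.1 * p.2) ⁻¹' {N}, H p := by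
    split_ifs with hN
    · rw [tsum_preimage_mul_eq_sum_divisors (fun d m => H (d, m)) (by omega),
        ← ENNReal.ofReal_sum_of_nonneg fun d _ => by positivity]
      refine (ENNReal.ofReal_le_ofReal (norm_negDerivMulCoeff_sq_div_le hb a hN)).trans_eq ?_
      refine congrArg ENNReal.ofReal (sum_congr rfl fun d hd => ?_)
      rw [Nat.mul_div_cancel' (Nat.dvd_of_mem_divisors hd)]
    · exact zero_le
  have hterm (p : ℕ × ℕ) : H p ≤ ENNReal.ofReal (‖b p.1‖ ^ 2) *
      if 1 ≤ p.2 then ENNReal.ofReal (‖a p.2‖ ^ 2) else 0 := by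
    obtain ⟨d, m⟩ := p
    rcases m.eq_zero_or_pos with rfl | hm
    · simp [H]
    rcases d.eq_zero_or_pos with rfl | hd
    · simp [H]
    simp only [H, if_pos (show 1 ≤ m from hm)]
    rw [← ENNReal.ofReal_mul (sq_nonneg _), ← mul_pow, ← norm_mul]
    refine ENNReal.ofReal_le_ofReal (mul_le_of_le_one_left (sq_nonneg _) ?_)
    exact div_le_one_of_le₀ (Real.log_le_log (by positivity)
      (by exact_mod_cast Nat.le_mul_of_pos_right d hm)) (Real.log_natCast_nonneg _)
  calc _ ≤ ∑' N, ∑' p : (fun p : ℕ × ℕ => p.1 * p.2) ⁻¹' {N}, H p :=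
        ENNReal.tsum_le_tsum hfiber
    _ = ∑' p, H p := ENNReal.tsum_fiberwise H _
    _ ≤ _ := ENNReal.tsum_le_tsum hterm
    _ = _ := by
      rw [ENNReal.tsum_prod', ← ENNReal.tsum_mul_right]
      simp_rw [ENNReal.tsum_mul_left]

theorem tsum_volterra_single_one {b : ℕ → ℂ} (hb : ∀ n < 2, b n = 0) :
    ∑' N : ℕ, (if 2 ≤ N then
        ENNReal.ofReal (‖negDerivMulCoeff b (Pi.single 1 1) N‖ ^ 2 / Real.log N ^ 2) else 0) =
      ∑' n, ENNReal.ofReal (‖b n‖ ^ 2) := by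
  refine tsum_congr fun N => ?_
  split_ifs with hN
  · have hlogN : Real.log N ≠ 0 := (Real.log_pos (by exact_mod_cast hN)).ne'
    rw [negDerivMulCoeff_single_one, norm_mul, Complex.norm_real, Real.norm_eq_abs, mul_pow,
      sq_abs, mul_div_cancel_right₀ _ (pow_ne_zero 2 hlogN)]
  · simp [hb N (by omega)]

theorem volterra_coprime_symbol_norm_general (𝒩 : Set ℕ) (h2 : ∀ n ∈ 𝒩, 2 ≤ n)
    (hcop : ∀ m ∈ 𝒩, ∀ n ∈ 𝒩, m ≠ n → Nat.Coprime m n)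
    (b : ℕ → ℂ) (hsupp : ∀ n, b n ≠ 0 → n ∈ 𝒩) :
    (⨆ a ∈ {a : ℕ → ℂ |
        (∑' n : ℕ, if 1 ≤ n then ENNReal.ofReal (‖a n‖ ^ 2) else 0) ≤ 1},
      ∑' N : ℕ, (if 2 ≤ N then
          ENNReal.ofReal
            (‖∑ d ∈ N.divisors, b d * (Real.log d : ℂ) * a (N / d)‖ ^ 2 /
              Real.log N ^ 2)
        else 0))
    = ∑' n : ℕ, ENNReal.ofReal (‖b n‖ ^ 2) := by
  have hb : (Function.support b).Pairwise Nat.Coprime := fun m hm n hn hmn =>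
    hcop m (hsupp m hm) n (hsupp n hn) hmn
  have hb2 : ∀ n < 2, b n = 0 := fun n hn => by_contra fun h => (h2 n (hsupp n h)).not_gt hn
  have hsingle :
      (∑' n : ℕ, if 1 ≤ n then ENNReal.ofReal (‖(Pi.single 1 1 : ℕ → ℂ) n‖ ^ 2) else 0) = 1 := by
    rw [tsum_eq_single 1 fun n hn => by simp [hn]]
    simp
  refine le_antisymm (iSup₂_le fun a ha => ?_)
    (le_iSup₂_of_le (Pi.single 1 1) hsingle.le (tsum_volterra_single_one hb2).ge)
  calc _ ≤ _ := tsum_volterra_le hb a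
    _ ≤ (∑' n, ENNReal.ofReal (‖b n‖ ^ 2)) * 1 := by gcongr; exact ha
    _ = _ := mul_one _

/-- for a symbol `g(s) = ∑_{n∈𝒩} b_n n^{-s}` supported on a set `𝒩` of
pairwise coprime integers `≥ 2`, with `∑_{n∈𝒩}|b_n|² < ∞`, the operator norm of the
Volterra operator on `H²` equals `‖g‖_{H²}`: the supremum of
`∑_{N≥2} (log N)^{-2}|∑_{n∈𝒩, n∣N} b_n (log n) a_{N/n}|²` over the unit ball
`∑_{j≥1}|a_j|² ≤ 1` is exactly `∑_{n∈𝒩} |b_n|²`. -/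
theorem volterra_coprime_symbol_norm (𝒩 : Set ℕ) (h2 : ∀ n ∈ 𝒩, 2 ≤ n)
    (hcop : ∀ m ∈ 𝒩, ∀ n ∈ 𝒩, m ≠ n → Nat.Coprime m n)
    (b : ℕ → ℂ) (hsupp : ∀ n, b n ≠ 0 → n ∈ 𝒩)
    (hb : (∑' n : ℕ, ENNReal.ofReal (‖b n‖ ^ 2)) ≠ ⊤) :
    (⨆ a ∈ {a : ℕ → ℂ |
        (∑' n : ℕ, if 1 ≤ n then ENNReal.ofReal (‖a n‖ ^ 2) else 0) ≤ 1},
      ∑' N : ℕ, (if 2 ≤ N then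
          ENNReal.ofReal
            (‖∑ d ∈ N.divisors, b d * (Real.log d : ℂ) * a (N / d)‖ ^ 2 /
              Real.log N ^ 2)
        else 0))
    = ∑' n : ℕ, ENNReal.ofReal (‖b n‖ ^ 2) :=
  volterra_coprime_symbol_norm_general 𝒩 h2 hcop b hsupp
end
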